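/- arXiv:1909.11860 — 3 statements merged into one kernel-verified Lean document; each statement's English description precedes it below -/
import Mathlib

section
/- Let G be a simple graph on n vertices with m edges, and let λ_n(G) be the smallest eigenvalue of the adjacency matrix A(G). Then mcut(G) ≤ m/2 - n·λ_n(G)/4. -/
/-! Rayleigh's principle: `A - λₙ • 1` has spectrum `{λᵢ - λₙ} ⊆ [0, ∞)`, hence is positive
semidefinite, so `xᵀ A x ≥ λₙ ‖x‖²`. For the ±1 vector `x` of a maximum cut `S` this reads
`n λₙ ≤ 2m - 4 mcut(G)`: an edge contributes `2` to `xᵀ A x` inside a side and `-2` across. -/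

open Finset Matrix BigOperators

set_option linter.unusedSectionVars false

variable {V : Type*} [Fintype V] [DecidableEq V]

/-- Number of edges of `G` with exactly one endpoint in `S` (each unordered edge counted once,
as the ordered pair going out of `S`). -/
def cutNum (G : SimpleGraph V) [DecidableRel G.Adj] (S : Finset V) : ℕ :=
  (Finset.univ.filter (fun p : V × V => G.Adj p.1 p.2 ∧ p.1 ∈ S ∧ p.2 ∉ S)).card

/-- Number of edges of `G` with both endpoints in `S` or both outside `S`. -/
def cohNum (G : SimpleGraph V) [DecidableRel G.Adj] (S : Finset V) : ℕ :=
  G.edgeFinset.card - cutNum G S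

/-- The maximum cut of `G`. -/
def mcut (G : SimpleGraph V) [DecidableRel G.Adj] : ℕ :=
  Finset.univ.sup (fun S : Finset V => cutNum G S)

/-- The ±1 partition vector of a vertex subset `S`. -/
def pvec (S : Finset V) : V → ℝ := fun v => if v ∈ S then 1 else -1

/-- The signless Laplacian matrix `Q = D + A` of a graph. -/
def signlessLap (G : SimpleGraph V) [DecidableRel G.Adj] : Matrix V V ℝ :=
  G.degMatrix ℝ + G.adjMatrix ℝ

lemma isHermitian_adj (G : SimpleGraph V) [DecidableRel G.Adj] :
    (G.adjMatrix ℝ).IsHermitian := by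
  rw [IsHermitian, conjTranspose_eq_transpose_of_trivial]
  exact SimpleGraph.isSymm_adjMatrix G

lemma isHermitian_lap (G : SimpleGraph V) [DecidableRel G.Adj] :
    (G.lapMatrix ℝ).IsHermitian := by
  rw [IsHermitian, conjTranspose_eq_transpose_of_trivial]
  exact G.isSymm_lapMatrix ℝ

lemma isHermitian_signlessLap (G : SimpleGraph V) [DecidableRel G.Adj] :
    (signlessLap G).IsHermitian := by
  rw [IsHermitian, conjTranspose_eq_transpose_of_trivial]
  exact (G.isSymm_degMatrix ℝ).add (SimpleGraph.isSymm_adjMatrix G)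

/-- The spanning subgraph of `G` consisting of the edges between `S` and its complement. -/
def crossGraph (G : SimpleGraph V) (S : Finset V) : SimpleGraph V where
  Adj u v := G.Adj u v ∧ ((u ∈ S) ↔ (v ∉ S))
  symm := ⟨fun u v h => ⟨h.1.symm, by tauto⟩⟩
  loopless := ⟨fun v h => G.loopless.irrefl v h.1⟩

/-- The spanning subgraph of `G` consisting of the edges inside `S` or inside its complement. -/
def insideGraph (G : SimpleGraph V) (S : Finset V) : SimpleGraph V where
  Adj u v := G.Adj u v ∧ ((u ∈ S) ↔ (v ∈ S))
  symm := ⟨fun u v h => ⟨h.1.symm, h.2.symm⟩⟩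
  loopless := ⟨fun v h => G.loopless.irrefl v h.1⟩

instance (G : SimpleGraph V) [DecidableRel G.Adj] (S : Finset V) :
    DecidableRel (crossGraph G S).Adj := fun _ _ => inferInstanceAs (Decidable (_ ∧ _))

instance (G : SimpleGraph V) [DecidableRel G.Adj] (S : Finset V) :
    DecidableRel (insideGraph G S).Adj := fun _ _ => inferInstanceAs (Decidable (_ ∧ _))

/-- The second largest value (with multiplicity) of a finitely indexed family of reals. -/
noncomputable def secondLargest (f : V → ℝ) : ℝ :=
  (Multiset.sort (Finset.univ.val.map f) (· ≤ ·)).getD (Fintype.card V - 2) 0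

/-- The join of two graphs: disjoint union plus all edges in between. -/
def joinGraph {α β : Type*} (H₁ : SimpleGraph α) (H₂ : SimpleGraph β) :
    SimpleGraph (α ⊕ β) where
  Adj x y :=
    match x, y with
    | Sum.inl u, Sum.inl v => H₁.Adj u v
    | Sum.inr u, Sum.inr v => H₂.Adj u v
    | Sum.inl _, Sum.inr _ => True
    | Sum.inr _, Sum.inl _ => True
  symm := ⟨by rintro (u | u) (v | v) h <;> first | exact h.symm | trivial⟩
  loopless := ⟨by
    rintro (u | u) h
    · exact H₁.loopless.irrefl u h
    · exact H₂.loopless.irrefl u h⟩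

instance {α β : Type*} (H₁ : SimpleGraph α) (H₂ : SimpleGraph β)
    [DecidableRel H₁.Adj] [DecidableRel H₂.Adj] :
    DecidableRel (joinGraph H₁ H₂).Adj := fun x y =>
  match x, y with
  | Sum.inl u, Sum.inl v => inferInstanceAs (Decidable (H₁.Adj u v))
  | Sum.inr u, Sum.inr v => inferInstanceAs (Decidable (H₂.Adj u v))
  | Sum.inl _, Sum.inr _ => inferInstanceAs (Decidable True)
  | Sum.inr _, Sum.inl _ => inferInstanceAs (Decidable True)

open scoped MatrixOrder in
lemma Matrix.IsHermitian.algebraMap_iInf_eigenvalues_le {n : Type*} [Fintype n] [DecidableEq n]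
    {A : Matrix n n ℝ} (hA : A.IsHermitian) :
    algebraMap ℝ (Matrix n n ℝ) (⨅ i, hA.eigenvalues i) ≤ A := by
  rw [algebraMap_le_iff_le_spectrum (A := Matrix n n ℝ) hA.isSelfAdjoint,
    hA.spectrum_real_eq_range_eigenvalues]
  rintro _ ⟨i, rfl⟩
  exact ciInf_le (Set.finite_range _).bddBelow i

open scoped MatrixOrder in
lemma Matrix.IsHermitian.iInf_eigenvalues_mul_dotProduct_self_le {n : Type*} [Fintype n]
    [DecidableEq n] {A : Matrix n n ℝ} (hA : A.IsHermitian) (x : n → ℝ) :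
    (⨅ i, hA.eigenvalues i) * (x ⬝ᵥ x) ≤ x ⬝ᵥ A *ᵥ x := by
  have h := (Matrix.le_iff.mp hA.algebraMap_iInf_eigenvalues_le).dotProduct_mulVec_nonneg x
  simp only [Algebra.algebraMap_eq_smul_one, sub_mulVec, smul_mulVec, one_mulVec, dotProduct_sub,
    dotProduct_smul, star_trivial, smul_eq_mul] at h
  linarith

lemma pvec_mul_pvec (S : Finset V) (u v : V) :
    pvec S u * pvec S v = 1 - 2 * if (u ∈ S ↔ v ∉ S) then 1 else 0 := by
  unfold pvec
  by_cases hu : u ∈ S <;> by_cases hv : v ∈ S <;> norm_num [hu, hv]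

lemma pvec_dotProduct_self (S : Finset V) : pvec S ⬝ᵥ pvec S = Fintype.card V := by
  simp [dotProduct, pvec_mul_pvec]

lemma card_adj_separated (G : SimpleGraph V) [DecidableRel G.Adj] (S : Finset V) :
    #{p : V × V | G.Adj p.1 p.2 ∧ (p.1 ∈ S ↔ p.2 ∉ S)} = 2 * cutNum G S := by
  rw [card_filter, two_mul, cutNum, card_filter]
  nth_rw 2 [← (Equiv.prodComm V V).sum_comp]
  rw [← sum_add_distrib]
  refine sum_congr rfl fun p _ => ?_
  by_cases h1 : p.1 ∈ S <;> by_cases h2 : p.2 ∈ S <;> simp [h1, h2, G.adj_comm p.1 p.2]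

lemma pvec_dotProduct_adjMatrix_mulVec (G : SimpleGraph V) [DecidableRel G.Adj] (S : Finset V) :
    pvec S ⬝ᵥ G.adjMatrix ℝ *ᵥ pvec S = 2 * #G.edgeFinset - 4 * cutNum G S := by
  have hdeg : ∑ u : V, ∑ v : V, (if G.Adj u v then (1 : ℝ) else 0) = 2 * #G.edgeFinset := by
    simp_rw [← G.degree_eq_sum_if_adj]
    exact_mod_cast G.sum_degrees_eq_twice_card_edges
  have hcut : ∑ u : V, ∑ v : V, (if G.Adj u v ∧ (u ∈ S ↔ v ∉ S) then (1 : ℝ) else 0)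
      = 2 * cutNum G S := by
    rw [← Fintype.sum_prod_type', sum_boole, card_adj_separated, Nat.cast_mul, Nat.cast_two]
  calc pvec S ⬝ᵥ G.adjMatrix ℝ *ᵥ pvec S
      = ∑ u : V, ∑ v : V, ((if G.Adj u v then (1 : ℝ) else 0)
          - 2 * if G.Adj u v ∧ (u ∈ S ↔ v ∉ S) then 1 else 0) := by
        rw [SimpleGraph.dotProduct_mulVec_adjMatrix]
        refine sum_congr rfl fun u _ => sum_congr rfl fun v _ => ?_
        by_cases h : G.Adj u v <;> simp [h, pvec_mul_pvec]
    _ = 2 * #G.edgeFinset - 2 * (2 * cutNum G S) := by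
        simp only [sum_sub_distrib, ← mul_sum, hdeg, hcut]
    _ = 2 * #G.edgeFinset - 4 * cutNum G S := by ring

/-- `mcut(G) ≤ m/2 - n·λₙ(G)/4`. -/
theorem stmt4 (G : SimpleGraph V) [DecidableRel G.Adj] :
    (mcut G : ℝ) ≤ (G.edgeFinset.card : ℝ) / 2 - (Fintype.card V : ℝ) * (⨅ i, (isHermitian_adj G).eigenvalues i) / 4 := by
  obtain ⟨S, -, hS⟩ := exists_mem_eq_sup (univ : Finset (Finset V)) univ_nonempty (cutNum G)
  have hrayleigh := (isHermitian_adj G).iInf_eigenvalues_mul_dotProduct_self_le (pvec S)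
  rw [pvec_dotProduct_self, pvec_dotProduct_adjMatrix_mulVec] at hrayleigh
  rw [mcut, hS]
  linarith
end

section
/- Let G be a simple graph on n vertices and S ⊆ V. The partition vector p_S (entries +1 on S, -1 off S) is an eigenvector of the signless Laplacian Q(G) with eigenvalue q if and only if both induced subgraphs G[S] and G[V\S] are (q/2)-regular. -/
open Finset Matrix BigOperators

set_option linter.unusedSectionVars false

variable {V : Type*} [Fintype V] [DecidableEq V]

lemma pvec_of_mem {S : Finset V} {v : V} (hv : v ∈ S) : pvec S v = 1 := if_pos hv

lemma pvec_of_notMem {S : Finset V} {v : V} (hv : v ∉ S) : pvec S v = -1 := if_neg hv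

namespace SimpleGraph

variable (G : SimpleGraph V) [DecidableRel G.Adj] (S : Finset V) (v : V)

lemma filter_mem_neighborFinset (T : Finset V) :
    (G.neighborFinset v).filter (· ∈ T) = T.filter (G.Adj v) := by
  ext u
  simp [and_comm]

lemma degree_eq_card_filter_add_card_filter_compl :
    G.degree v = #(S.filter (G.Adj v)) + #(Sᶜ.filter (G.Adj v)) := by
  rw [← card_neighborFinset_eq_degree,
    ← card_filter_add_card_filter_not (s := G.neighborFinset v) (· ∈ S)]
  simp only [← mem_compl, filter_mem_neighborFinset]

lemma adjMatrix_mulVec_pvec_apply :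
    (G.adjMatrix ℝ *ᵥ pvec S) v = #(S.filter (G.Adj v)) - #(Sᶜ.filter (G.Adj v)) := by
  rw [adjMatrix_mulVec_apply, ← sum_filter_add_sum_filter_not _ (· ∈ S)]
  simp only [← mem_compl, filter_mem_neighborFinset]
  rw [sum_congr rfl fun u hu => pvec_of_mem (mem_filter.mp hu).1,
    sum_congr rfl fun u hu => pvec_of_notMem (mem_compl.mp (mem_filter.mp hu).1)]
  simp [sub_eq_add_neg]

lemma signlessLap_mulVec_apply (x : V → ℝ) :
    (signlessLap G *ᵥ x) v = G.degree v * x v + (G.adjMatrix ℝ *ᵥ x) v := by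
  rw [signlessLap, add_mulVec, Pi.add_apply, degMatrix_mulVec_apply]

lemma signlessLap_mulVec_pvec_apply_of_mem (hv : v ∈ S) :
    (signlessLap G *ᵥ pvec S) v = 2 * #(S.filter (G.Adj v)) := by
  rw [signlessLap_mulVec_apply, adjMatrix_mulVec_pvec_apply,
    degree_eq_card_filter_add_card_filter_compl G S, pvec_of_mem hv]
  push_cast
  ring

lemma signlessLap_mulVec_pvec_apply_of_notMem (hv : v ∉ S) :
    (signlessLap G *ᵥ pvec S) v = -(2 * #(Sᶜ.filter (G.Adj v))) := by
  rw [signlessLap_mulVec_apply, adjMatrix_mulVec_pvec_apply,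
    degree_eq_card_filter_add_card_filter_compl G S, pvec_of_notMem hv]
  push_cast
  ring

end SimpleGraph

open SimpleGraph in
/-- `pₛ` is an eigenvector of `Q(G)` for the eigenvalue `q` iff both induced subgraphs
`G[S]` and `G[V \ S]` are `(q/2)`-regular. -/
theorem stmt10 (G : SimpleGraph V) [DecidableRel G.Adj] (S : Finset V) (q : ℝ) :
    signlessLap G *ᵥ pvec S = q • pvec S ↔
      ((∀ v ∈ S, ((S.filter (fun u => G.Adj v u)).card : ℝ) = q / 2) ∧
        (∀ v ∉ S, ((Sᶜ.filter (fun u => G.Adj v u)).card : ℝ) = q / 2)) := by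
  have entry_iff_of_mem {v} (hv : v ∈ S) :
      (signlessLap G *ᵥ pvec S) v = (q • pvec S) v ↔ (#(S.filter (G.Adj v)) : ℝ) = q / 2 := by
    rw [signlessLap_mulVec_pvec_apply_of_mem G S v hv, Pi.smul_apply, pvec_of_mem hv,
      smul_eq_mul]
    constructor <;> intro h <;> linarith
  have entry_iff_of_notMem {v} (hv : v ∉ S) :
      (signlessLap G *ᵥ pvec S) v = (q • pvec S) v ↔ (#(Sᶜ.filter (G.Adj v)) : ℝ) = q / 2 := by
    rw [signlessLap_mulVec_pvec_apply_of_notMem G S v hv, Pi.smul_apply, pvec_of_notMem hv,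
      smul_eq_mul]
    constructor <;> intro h <;> linarith
  rw [funext_iff]
  constructor
  · intro h
    exact ⟨fun v hv => (entry_iff_of_mem hv).mp (h v),
      fun v hv => (entry_iff_of_notMem hv).mp (h v)⟩
  · rintro ⟨hS, hSc⟩ v
    by_cases hv : v ∈ S
    · exact (entry_iff_of_mem hv).mpr (hS v hv)
    · exact (entry_iff_of_notMem hv).mpr (hSc v hv)
end

section
/- Let H_1 and H_2 be simple graphs each on n vertices and let G = H_1 ∇ H_2 be their join. Then G is L-exact: μ_1(G) = 2n = (4/(2n))·mcut(G), with mcut(G) = n², attained by the partition {V(H_1), V(H_2)}. -/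
open Finset Matrix BigOperators

set_option linter.unusedSectionVars false

variable {V : Type*} [Fintype V] [DecidableEq V]

/-!
Let `x = pvec S` be the ±1 vector of the side `S = V(H₁)` of the join. Every vertex has exactly `k`
neighbours across the cut `(S, Sᶜ)`, so `L x = 2k x`. Since `|V| • 1 - L(G) = L(Gᶜ) + J` is
positive semidefinite, no Laplacian eigenvalue exceeds `|V| = 2k`; hence `μ₁ = 2k`. Every cut
`(S, Sᶜ)` has at most `|S| |Sᶜ| ≤ k²` edges, with equality for the two sides of the join, so
`mcut = k²` and `4 / (2k) · mcut = 2k = μ₁`.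
-/

namespace Matrix.IsHermitian

variable {n : Type*} [Fintype n] [DecidableEq n] {A : Matrix n n ℝ}

open scoped MatrixOrder in
lemma eigenvalues_le_of_posSemidef_smul_one_sub (hA : A.IsHermitian) {c : ℝ}
    (h : (c • 1 - A).PosSemidef) (i : n) : hA.eigenvalues i ≤ c := by
  have hle : A ≤ algebraMap ℝ (Matrix n n ℝ) c := by
    rwa [Matrix.le_iff, Algebra.algebraMap_eq_smul_one]
  exact (le_algebraMap_iff_spectrum_le hA.isSelfAdjoint).mp hle _
    (hA.eigenvalues_mem_spectrum_real i)

lemma exists_eigenvalues_eq_of_mulVec_eq_smul (hA : A.IsHermitian) {x : n → ℝ} (hx : x ≠ 0)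
    {μ : ℝ} (hAx : A *ᵥ x = μ • x) : ∃ i, hA.eigenvalues i = μ := by
  have hμ : Module.End.HasEigenvalue A.toLin' μ :=
    Module.End.hasEigenvalue_of_hasEigenvector
      ⟨by simpa [Module.End.mem_eigenspace_iff] using hAx, hx⟩
  have : μ ∈ spectrum ℝ A := spectrum_toLin' A ▸ hμ.mem_spectrum
  rwa [hA.spectrum_real_eq_range_eigenvalues] at this

lemma iSup_eigenvalues_eq_of_mulVec_eq_smul (hA : A.IsHermitian) {c : ℝ}
    (h : (c • 1 - A).PosSemidef) {x : n → ℝ} (hx : x ≠ 0) (hAx : A *ᵥ x = c • x) :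
    ⨆ i, hA.eigenvalues i = c := by
  obtain ⟨i, hi⟩ := hA.exists_eigenvalues_eq_of_mulVec_eq_smul hx hAx
  have : Nonempty n := ⟨i⟩
  refine IsLUB.ciSup_eq (IsGreatest.isLUB ⟨⟨i, hi⟩, ?_⟩)
  rintro _ ⟨j, rfl⟩
  exact hA.eigenvalues_le_of_posSemidef_smul_one_sub h j

end Matrix.IsHermitian

namespace SimpleGraph

variable (G : SimpleGraph V) [DecidableRel G.Adj]

lemma lapMatrix_add_lapMatrix_compl :
    G.lapMatrix ℝ + Gᶜ.lapMatrix ℝ = (Fintype.card V : ℝ) • 1 - Matrix.of fun _ _ => 1 := by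
  ext i j
  by_cases hij : i = j
  · subst hij
    have hdeg : (G.degree i : ℝ) + Gᶜ.degree i + 1 = Fintype.card V := by
      have := G.degree_lt_card_verts i
      rw [degree_compl]
      norm_cast
      omega
    simp [lapMatrix, degMatrix, ← hdeg]
  · by_cases h : G.Adj i j <;> simp [lapMatrix, degMatrix, hij, h]

lemma posSemidef_card_smul_one_sub_lapMatrix :
    ((Fintype.card V : ℝ) • 1 - G.lapMatrix ℝ).PosSemidef := by
  have hsplit : (Fintype.card V : ℝ) • 1 - G.lapMatrix ℝ
      = Gᶜ.lapMatrix ℝ + vecMulVec (fun _ => 1) (star fun _ => 1) := by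
    have hJ : vecMulVec (fun _ => 1) (star fun _ => 1) = Matrix.of fun (_ _ : V) => (1 : ℝ) := by
      ext; simp [vecMulVec]
    have hsum := eq_sub_iff_add_eq.mp G.lapMatrix_add_lapMatrix_compl
    rw [hJ, ← hsum]
    abel
  rw [hsplit]
  exact (posSemidef_lapMatrix ℝ Gᶜ).add (posSemidef_vecMulVec_self_star _)

end SimpleGraph

section PartitionVector

variable {W : Type*} [DecidableEq W]

lemma pvec_sub_pvec (S : Finset W) (u v : W) :
    pvec S v - pvec S u = if (v ∈ S ↔ u ∉ S) then 2 * pvec S v else 0 := by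
  by_cases hv : v ∈ S <;> by_cases hu : u ∈ S <;> norm_num [pvec, hu, hv]

lemma pvec_ne_zero [Nonempty W] (S : Finset W) : pvec S ≠ 0 := by
  obtain ⟨v⟩ := ‹Nonempty W›
  intro h
  have := congrFun h v
  by_cases hv : v ∈ S <;> simp [pvec, hv] at this

end PartitionVector

section Cut

open SimpleGraph

variable (G : SimpleGraph V) [DecidableRel G.Adj]

lemma neighborFinset_crossGraph (S : Finset V) (v : V) :
    (crossGraph G S).neighborFinset v = (G.neighborFinset v).filter (fun u => v ∈ S ↔ u ∉ S) := by
  ext u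
  simp only [mem_neighborFinset, mem_filter]
  rfl

lemma lapMatrix_mulVec_pvec_apply (S : Finset V) (v : V) :
    (G.lapMatrix ℝ *ᵥ pvec S) v = 2 * (crossGraph G S).degree v * pvec S v := by
  calc (G.lapMatrix ℝ *ᵥ pvec S) v = ∑ u ∈ G.neighborFinset v, (pvec S v - pvec S u) := by
        rw [lapMatrix_mulVec_apply, sum_sub_distrib, sum_const,
          card_neighborFinset_eq_degree, nsmul_eq_mul]
    _ = ∑ u ∈ (G.neighborFinset v).filter (fun u => v ∈ S ↔ u ∉ S), 2 * pvec S v := by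
        rw [sum_filter]
        exact sum_congr rfl fun u _ => pvec_sub_pvec S u v
    _ = 2 * (crossGraph G S).degree v * pvec S v := by
        rw [sum_const, ← neighborFinset_crossGraph, card_neighborFinset_eq_degree,
          nsmul_eq_mul]
        ring

lemma lapMatrix_mulVec_pvec_of_isRegularOfDegree {S : Finset V} {d : ℕ}
    (h : (crossGraph G S).IsRegularOfDegree d) :
    G.lapMatrix ℝ *ᵥ pvec S = (2 * d : ℝ) • pvec S := by
  ext v
  rw [lapMatrix_mulVec_pvec_apply, h v, Pi.smul_apply, smul_eq_mul]

lemma cutNum_le_card_mul_card_compl (S : Finset V) : cutNum G S ≤ #S * #Sᶜ := by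
  rw [cutNum, ← card_product]
  refine card_le_card fun p hp => ?_
  simp only [mem_filter, mem_univ, true_and] at hp
  simp [hp.2.1, hp.2.2]

lemma cutNum_eq_card_mul_card_compl {S : Finset V} (h : ∀ u ∈ S, ∀ v ∉ S, G.Adj u v) :
    cutNum G S = #S * #Sᶜ := by
  rw [cutNum, ← card_product]
  congr 1
  ext ⟨u, v⟩
  simp only [mem_filter, mem_univ, true_and, mem_product, mem_compl]
  exact ⟨fun huv => huv.2, fun huv => ⟨h u huv.1 v huv.2, huv⟩⟩

lemma four_mul_cutNum_le (S : Finset V) : 4 * cutNum G S ≤ Fintype.card V ^ 2 := by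
  have hcard : #S + #Sᶜ = Fintype.card V := card_add_card_compl S
  have := cutNum_le_card_mul_card_compl G S
  rw [← hcard]
  nlinarith [sq_nonneg ((#S : ℤ) - #Sᶜ)]

lemma four_mul_mcut_le : 4 * mcut G ≤ Fintype.card V ^ 2 := by
  obtain ⟨S, -, hS⟩ := exists_mem_eq_sup univ univ_nonempty (cutNum G)
  rw [mcut, hS]
  exact four_mul_cutNum_le G S

lemma cutNum_le_mcut (S : Finset V) : cutNum G S ≤ mcut G :=
  le_sup (f := cutNum G) (mem_univ S)

end Cut

section Join

variable {α β : Type*} [Fintype α] [DecidableEq α] [DecidableEq β]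
  (H₁ : SimpleGraph α) (H₂ : SimpleGraph β)

lemma crossGraph_joinGraph_adj (x y : α ⊕ β) :
    (crossGraph (joinGraph H₁ H₂) (univ.image Sum.inl)).Adj x y ↔ (x.isLeft ↔ y.isRight) := by
  rcases x with a | a <;> rcases y with b | b <;> simp [crossGraph, joinGraph]

variable [Fintype β] [DecidableRel H₁.Adj] [DecidableRel H₂.Adj]

lemma degree_crossGraph_joinGraph_inl (a : α) :
    (crossGraph (joinGraph H₁ H₂) (univ.image Sum.inl)).degree (Sum.inl a) = Fintype.card β := by
  have hN : (crossGraph (joinGraph H₁ H₂) (univ.image Sum.inl)).neighborFinset (Sum.inl a)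
      = univ.map Function.Embedding.inr := by
    ext (b | b) <;> simp [crossGraph_joinGraph_adj]
  rw [← SimpleGraph.card_neighborFinset_eq_degree, hN, card_map, card_univ]

lemma degree_crossGraph_joinGraph_inr (b : β) :
    (crossGraph (joinGraph H₁ H₂) (univ.image Sum.inl)).degree (Sum.inr b) = Fintype.card α := by
  have hN : (crossGraph (joinGraph H₁ H₂) (univ.image Sum.inl)).neighborFinset (Sum.inr b)
      = univ.map Function.Embedding.inl := by
    ext (a | a) <;> simp [crossGraph_joinGraph_adj]
  rw [← SimpleGraph.card_neighborFinset_eq_degree, hN, card_map, card_univ]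

lemma isRegularOfDegree_crossGraph_joinGraph (h : Fintype.card α = Fintype.card β) :
    (crossGraph (joinGraph H₁ H₂) (univ.image Sum.inl)).IsRegularOfDegree (Fintype.card α) := by
  rintro (a | b)
  · rw [degree_crossGraph_joinGraph_inl, h]
  · rw [degree_crossGraph_joinGraph_inr]

lemma cutNum_joinGraph_image_inl :
    cutNum (joinGraph H₁ H₂) (univ.image Sum.inl) = Fintype.card α * Fintype.card β := by
  rw [cutNum_eq_card_mul_card_compl, card_compl, card_image_of_injective _ Sum.inl_injective,
    card_univ, Fintype.card_sum, Nat.add_sub_cancel_left]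
  rintro (a | a) ha (b | b) hb <;> simp_all [joinGraph]

end Join

/-- The join of any two graphs on `n` vertices is `L`-exact, with `μ₁ = 2n`,
`mcut = n²` attained by the partition into the two sides. -/
theorem stmt17 {k : ℕ} (H₁ H₂ : SimpleGraph (Fin k))
    [DecidableRel H₁.Adj] [DecidableRel H₂.Adj] :
    (⨆ i, (isHermitian_lap (joinGraph H₁ H₂)).eigenvalues i) = 2 * (k : ℝ) ∧
      mcut (joinGraph H₁ H₂) = k ^ 2 ∧
      cutNum (joinGraph H₁ H₂) (Finset.univ.image Sum.inl) = mcut (joinGraph H₁ H₂) ∧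
      (⨆ i, (isHermitian_lap (joinGraph H₁ H₂)).eigenvalues i) =
        4 / (2 * (k : ℝ)) * mcut (joinGraph H₁ H₂) := by
  have hcut : cutNum (joinGraph H₁ H₂) (univ.image Sum.inl) = k ^ 2 := by
    rw [cutNum_joinGraph_image_inl, Fintype.card_fin, sq]
  have hmcut : mcut (joinGraph H₁ H₂) = k ^ 2 := by
    have hle := four_mul_mcut_le (joinGraph H₁ H₂)
    have hge := hcut ▸ cutNum_le_mcut (joinGraph H₁ H₂) (univ.image Sum.inl)
    rw [Fintype.card_sum, Fintype.card_fin] at hle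
    nlinarith
  have hμ : ⨆ i, (isHermitian_lap (joinGraph H₁ H₂)).eigenvalues i = 2 * k := by
    rcases k.eq_zero_or_pos with rfl | hk
    · simp [Real.iSup_of_isEmpty]
    have : Nonempty (Fin k) := ⟨⟨0, hk⟩⟩
    have hreg := isRegularOfDegree_crossGraph_joinGraph H₁ H₂ rfl
    rw [Fintype.card_fin] at hreg
    refine (isHermitian_lap _).iSup_eigenvalues_eq_of_mulVec_eq_smul ?_ (pvec_ne_zero _)
      (lapMatrix_mulVec_pvec_of_isRegularOfDegree _ hreg)
    simpa [two_mul] using (joinGraph H₁ H₂).posSemidef_card_smul_one_sub_lapMatrix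
  refine ⟨hμ, hmcut, hcut.trans hmcut.symm, ?_⟩
  rw [hμ, hmcut]
  rcases k.eq_zero_or_pos with rfl | hk
  · simp
  · field_simp
    push_cast
    ring
end
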